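/- arXiv:2307.04209 — 6 statements merged into one kernel-verified Lean document; each statement's English description precedes it below -/
import Mathlib

section
/- For every integer p ≥ 5, the binomial coefficient C(p²-2p+1, p-1) is strictly greater than C(p-1, 3) · C(p²-2p+1, p-4). -/
/-!
Choosing a `k`-subset of `[n]` and then `s` of its elements, or first the `k - s` others, gives
`C(n, k) C(k, s) = C(n, k - s) C(n - k + s, s)`; hence `C(k, s) C(n, k - s) < C(n, k)` as soon as
`C(k, s)² < C(n - k + s, s)`. For `k = p - 1`, `n = k²`, `s = 3` this reads
`C(k, 3)² < C(k² - k + 3, 3)`, and the six factors of `(k (k - 1) (k - 2))²` pair up into three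
products each below one factor of `(k² - k + 3) (k² - k + 2) (k² - k + 1)`.
-/

namespace Nat

theorem six_mul_choose_three (N : ℕ) : 6 * N.choose 3 = N * (N - 1) * (N - 2) := by
  rw [show 6 = (3 : ℕ)! from rfl, ← descFactorial_eq_factorial_mul_choose]
  simp only [descFactorial_succ, tsub_zero, descFactorial_zero, mul_one]
  ring

theorem choose_mul_choose_sub_lt_choose {n k s : ℕ} (hsk : s ≤ k) (hkn : k ≤ n)
    (h : k.choose s ^ 2 < (n - k + s).choose s) : k.choose s * n.choose (k - s) < n.choose k := by
  have hcount : n.choose k * k.choose s = n.choose (k - s) * (n - k + s).choose s := by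
    rw [← choose_symm hsk, choose_mul (k.sub_le s), Nat.sub_sub_self hsk]
    congr 2
    omega
  have hpos : 0 < n.choose (k - s) := choose_pos (by omega)
  refine Nat.lt_of_mul_lt_mul_right (a := k.choose s) ?_
  calc k.choose s * n.choose (k - s) * k.choose s = n.choose (k - s) * k.choose s ^ 2 := by ring
    _ < n.choose (k - s) * (n - k + s).choose s := Nat.mul_lt_mul_of_pos_left h hpos
    _ = n.choose k * k.choose s := hcount.symm

theorem choose_three_sq_lt_choose_three (k : ℕ) : k.choose 3 ^ 2 < (k ^ 2 - k + 3).choose 3 := by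
  rcases Nat.lt_or_ge k 3 with hk | hk
  · interval_cases k <;> decide
  obtain ⟨m, rfl⟩ := Nat.exists_eq_add_of_le' hk
  have hN : (m + 3) ^ 2 - (m + 3) + 3 = m ^ 2 + 5 * m + 9 := by
    have : (m + 3) ^ 2 = m ^ 2 + 6 * m + 9 := by ring
    omega
  have hk := six_mul_choose_three (m + 3)
  have hN3 := six_mul_choose_three (m ^ 2 + 5 * m + 9)
  rw [show m + 3 - 1 = m + 2 by omega, show m + 3 - 2 = m + 1 by omega] at hk
  rw [show m ^ 2 + 5 * m + 9 - 1 = m ^ 2 + 5 * m + 8 by omega,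
    show m ^ 2 + 5 * m + 9 - 2 = m ^ 2 + 5 * m + 7 by omega] at hN3
  rw [hN]
  have key : 36 * (m + 3).choose 3 ^ 2 < 36 * (m ^ 2 + 5 * m + 9).choose 3 :=
    calc 36 * (m + 3).choose 3 ^ 2
        = (6 * (m + 3).choose 3) ^ 2 := by ring
      _ = ((m + 3) * (m + 1)) * ((m + 3) * (m + 2)) * ((m + 2) * (m + 1)) := by rw [hk]; ring
      _ < (m ^ 2 + 5 * m + 9) * (m ^ 2 + 5 * m + 8) * (m ^ 2 + 5 * m + 7) := by
          gcongr <;> nlinarith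
      _ ≤ 6 * ((m ^ 2 + 5 * m + 9) * (m ^ 2 + 5 * m + 8) * (m ^ 2 + 5 * m + 7)) :=
          Nat.le_mul_of_pos_left _ (by norm_num)
      _ = 36 * (m ^ 2 + 5 * m + 9).choose 3 := by rw [← hN3]; ring
  exact Nat.lt_of_mul_lt_mul_left key

end Nat

theorem stmt_0 (p : ℕ) (hp : 5 ≤ p) :
    (p ^ 2 - 2 * p + 1).choose (p - 1) >
      (p - 1).choose 3 * (p ^ 2 - 2 * p + 1).choose (p - 4) := by
  obtain ⟨k, rfl⟩ : ∃ k, p = k + 1 := ⟨p - 1, by omega⟩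
  have hkk : k ≤ k ^ 2 := Nat.le_self_pow two_ne_zero k
  have hsq : (k + 1) ^ 2 - 2 * (k + 1) + 1 = k ^ 2 := by
    have : (k + 1) ^ 2 = k ^ 2 + 2 * k + 1 := by ring
    omega
  rw [hsq, Nat.add_sub_cancel, show k + 1 - 4 = k - 3 by omega]
  exact Nat.choose_mul_choose_sub_lt_choose (by omega) hkk (Nat.choose_three_sq_lt_choose_three k)
end

section
/- For every integer p ≥ 5, we have 2 · C(p²-2p+1, p-4) · C(p-1, 3) > Σ_{ℓ=0}^{p-4} (p-3-ℓ) · C(p-1, p-1-ℓ) · C(p²-2p+1, ℓ). -/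
/-!
Writing `m = p - 1`, so that `p² - 2p + 1 = m²` and `C(m, m - ℓ) = C(m, ℓ)`, the `ℓ`-th summand
is `(m - 2 - ℓ) C(m, ℓ) C(m², ℓ)` and the left-hand side is twice the last summand. The summands
at least double from each index to the next, so the sum is less than twice its last term.
-/

theorem Finset.sum_range_succ_lt_two_mul_of_two_mul_le (f : ℕ → ℕ) (n : ℕ) (h0 : 0 < f 0)
    (hf : ∀ k < n, 2 * f k ≤ f (k + 1)) :
    ∑ i ∈ range (n + 1), f i < 2 * f n := by
  induction n with
  | zero => simp only [zero_add, sum_range_one]; omega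
  | succ n ih =>
    have hsum := ih fun k hk => hf k (by omega)
    have hn := hf n n.lt_succ_self
    rw [sum_range_succ]
    omega

def chooseTerm (m ℓ : ℕ) : ℕ :=
  (m - 2 - ℓ) * m.choose ℓ * (m ^ 2).choose ℓ

theorem chooseTerm_pos {m : ℕ} (hm : 3 ≤ m) : 0 < chooseTerm m 0 := by
  simp only [chooseTerm, Nat.choose_zero_right, mul_one]
  omega

theorem two_mul_chooseTerm_le_succ {m ℓ : ℕ} (h : ℓ + 4 ≤ m) :
    2 * chooseTerm m ℓ ≤ chooseTerm m (ℓ + 1) := by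
  obtain ⟨j, rfl⟩ : ∃ j, m = ℓ + j + 4 := ⟨m - ℓ - 4, by omega⟩
  set m := ℓ + j + 4
  have hsq : (ℓ + 1) ^ 2 + ℓ ≤ m ^ 2 := by nlinarith
  have hcoef : 2 * (j + 2) ≤ (j + 1) * (j + 4) := by nlinarith
  have hm : m.choose (ℓ + 1) * (ℓ + 1) = m.choose ℓ * (j + 4) := by
    rw [Nat.choose_succ_right_eq, show m - ℓ = j + 4 by omega]
  have hm2 : (m ^ 2).choose (ℓ + 1) * (ℓ + 1) = (m ^ 2).choose ℓ * (m ^ 2 - ℓ) :=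
    Nat.choose_succ_right_eq _ _
  -- the ratio of consecutive terms is `(j + 1)(j + 4)(m² - ℓ) / ((j + 2)(ℓ + 1)²) ≥ 2`
  have hratio : 2 * (j + 2) * (ℓ + 1) ^ 2 ≤ (j + 1) * (j + 4) * (m ^ 2 - ℓ) :=
    Nat.mul_le_mul hcoef (Nat.le_sub_of_add_le hsq)
  unfold chooseTerm
  rw [show m - 2 - ℓ = j + 2 by omega, show m - 2 - (ℓ + 1) = j + 1 by omega]
  refine Nat.le_of_mul_le_mul_right (c := (ℓ + 1) ^ 2) ?_ (by positivity)
  calc 2 * ((j + 2) * m.choose ℓ * (m ^ 2).choose ℓ) * (ℓ + 1) ^ 2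
      = 2 * (j + 2) * (ℓ + 1) ^ 2 * (m.choose ℓ * (m ^ 2).choose ℓ) := by ring
    _ ≤ (j + 1) * (j + 4) * (m ^ 2 - ℓ) * (m.choose ℓ * (m ^ 2).choose ℓ) :=
      Nat.mul_le_mul_right _ hratio
    _ = (j + 1) * (m.choose (ℓ + 1) * (ℓ + 1)) * ((m ^ 2).choose (ℓ + 1) * (ℓ + 1)) := by
      rw [hm, hm2]; ring
    _ = (j + 1) * m.choose (ℓ + 1) * (m ^ 2).choose (ℓ + 1) * (ℓ + 1) ^ 2 := by ring

theorem sum_chooseTerm_lt {m : ℕ} (hm : 4 ≤ m) :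
    ∑ ℓ ∈ Finset.range (m - 2), chooseTerm m ℓ < 2 * chooseTerm m (m - 3) := by
  rw [show m - 2 = m - 3 + 1 by omega]
  exact Finset.sum_range_succ_lt_two_mul_of_two_mul_le _ _ (chooseTerm_pos (by omega))
    fun k hk => two_mul_chooseTerm_le_succ (by omega)

theorem stmt_1 (p : ℕ) (hp : 5 ≤ p) :
    2 * (p ^ 2 - 2 * p + 1).choose (p - 4) * (p - 1).choose 3 >
      ∑ ℓ ∈ Finset.range (p - 3),
        (p - 3 - ℓ) * (p - 1).choose (p - 1 - ℓ) * (p ^ 2 - 2 * p + 1).choose ℓ := by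
  obtain ⟨m, rfl⟩ : ∃ m, p = m + 1 := ⟨p - 1, by omega⟩
  have hsq : (m + 1) ^ 2 - 2 * (m + 1) + 1 = m ^ 2 := by
    zify [show 2 * (m + 1) ≤ (m + 1) ^ 2 by nlinarith]; ring
  simp only [hsq, Nat.add_sub_cancel, show m + 1 - 3 = m - 2 by omega,
    show m + 1 - 4 = m - 3 by omega]
  have hsummand : ∀ ℓ ∈ Finset.range (m - 2),
      (m - 2 - ℓ) * m.choose (m - ℓ) * (m ^ 2).choose ℓ = chooseTerm m ℓ := fun ℓ hℓ => by
    rw [chooseTerm, Nat.choose_symm (by simp at hℓ; omega)]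
  have hlast : 2 * (m ^ 2).choose (m - 3) * m.choose 3 = 2 * chooseTerm m (m - 3) := by
    rw [chooseTerm, show m - 2 - (m - 3) = 1 by omega, ← Nat.choose_symm (show 3 ≤ m by omega)]
    ring
  rw [Finset.sum_congr rfl hsummand, hlast]
  exact sum_chooseTerm_lt (by omega)
end

section
/- For every integer p ≥ 5, Σ_{ℓ=0}^{p-1} ℓ · C(p²-2p+1, ℓ) · C(p-1, ℓ) > (p-3) · C(p²-p, p-1). -/
/-!
With `p = n + 2` and `m = (n + 1) ^ 2`, the identity `ℓ * C(m, ℓ) = m * C(m - 1, ℓ - 1)` and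
Vandermonde's identity evaluate the sum as `m * C(m + n, n)`, while
`(n + 1) * C(m + n + 1, n + 1) = (m + n + 1) * C(m + n, n)`. The claim thus reduces to
`(n - 1) * (m + n + 1) < m * (n + 1)`, i.e. `(n - 1) * (n + 1) * (n + 2) < (n + 1) ^ 3`.
-/

open Finset

namespace Nat

theorem sum_range_choose_mul_choose_succ (m n : ℕ) :
    ∑ i ∈ range (n + 1), m.choose i * (n + 1).choose (i + 1) = (m + (n + 1)).choose n := by
  rw [add_choose_eq, Finset.Nat.sum_antidiagonal_eq_sum_range_succ_mk]
  refine sum_congr rfl fun i hi => ?_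
  rw [choose_symm_of_eq_add (by grind : n + 1 = (i + 1) + (n - i))]

theorem sum_range_mul_choose_mul_choose (m n : ℕ) :
    ∑ ℓ ∈ range (n + 2), ℓ * m.choose ℓ * (n + 1).choose ℓ = m * (m + n).choose n := by
  cases m with
  | zero => rw [zero_mul]; exact sum_eq_zero fun i _ => by cases i <;> simp
  | succ m =>
    have hterm (i : ℕ) : (i + 1) * (m + 1).choose (i + 1) = (m + 1) * m.choose i := by
      rw [add_one_mul_choose_eq, mul_comm]
    rw [sum_range_succ', zero_mul, zero_mul, add_zero]
    simp only [hterm, mul_assoc, ← mul_sum]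
    rw [sum_range_choose_mul_choose_succ, ← add_assoc, add_right_comm m n 1]

theorem sub_one_mul_choose_succ_lt {m n : ℕ} (h : (n - 1) * (m + n + 1) < m * (n + 1)) :
    (n - 1) * (m + n + 1).choose (n + 1) < m * (m + n).choose n := by
  have hpos : 0 < (m + n).choose n := choose_pos (by omega)
  have hpascal : (m + n + 1).choose (n + 1) * (n + 1) = (m + n + 1) * (m + n).choose n :=
    (add_one_mul_choose_eq _ _).symm
  refine lt_of_mul_lt_mul_right (a := n + 1) ?_ (Nat.zero_le _)
  calc (n - 1) * (m + n + 1).choose (n + 1) * (n + 1)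
      = (n - 1) * (m + n + 1) * (m + n).choose n := by rw [mul_assoc, hpascal, mul_assoc]
    _ < m * (n + 1) * (m + n).choose n := Nat.mul_lt_mul_of_pos_right h hpos
    _ = m * (m + n).choose n * (n + 1) := by ring

end Nat

theorem stmt_2 (p : ℕ) (hp : 5 ≤ p) :
    ∑ ℓ ∈ Finset.range p, ℓ * (p ^ 2 - 2 * p + 1).choose ℓ * (p - 1).choose ℓ >
      (p - 3) * (p ^ 2 - p).choose (p - 1) := by
  obtain ⟨n, rfl⟩ : ∃ n, p = n + 2 := ⟨p - 2, by omega⟩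
  have hm : (n + 2) ^ 2 - 2 * (n + 2) + 1 = (n + 1) ^ 2 := by grind
  have hN : (n + 2) ^ 2 - (n + 2) = (n + 1) ^ 2 + n + 1 := by grind
  rw [hm, hN, show n + 2 - 1 = n + 1 by omega, show n + 2 - 3 = n - 1 by omega,
    Nat.sum_range_mul_choose_mul_choose]
  refine Nat.sub_one_mul_choose_succ_lt ?_
  obtain ⟨k, rfl⟩ : ∃ k, n = k + 1 := ⟨n - 1, by omega⟩
  rw [Nat.add_sub_cancel]
  nlinarith
end

section
/- For integers 0 ≤ ℓ ≤ p-5 with p ≥ 5, the ratio d_ℓ / d_{ℓ+1} is at most d_{p-5} / d_{p-4}, where d_ℓ = (p-3-ℓ) · C(p-1, p-1-ℓ) · C(p²-2p+1, ℓ); equivalently, the function ℓ ↦ ((p-3-ℓ)/(p-4-ℓ)) · (ℓ+1)² / ((p²-2p+1-ℓ)(p-1-ℓ)) is monotonically increasing for ℓ in {0,1,...,p-5}. -/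
/-!
Since `d p ℓ = (p-3-ℓ) · C(p-1, ℓ) · C((p-1)², ℓ)`, the ratio of consecutive terms splits as
`d_ℓ / d_{ℓ+1} = (1 + 1/(p-4-ℓ)) · (ℓ+1)/(p-1-ℓ) · (ℓ+1)/((p-1)²-ℓ)`.
For `ℓ ≤ p-5` all three factors are positive and nondecreasing in `ℓ`, so the ratio is monotone
there and is largest at `ℓ = p-5`.
-/

/-- `d p ℓ = (p-3-ℓ) · C(p-1, p-1-ℓ) · C(p²-2p+1, ℓ)`. -/
def d (p ℓ : ℕ) : ℕ :=
  (p - 3 - ℓ) * (p - 1).choose (p - 1 - ℓ) * (p ^ 2 - 2 * p + 1).choose ℓ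

theorem Nat.cast_choose_div_choose_succ {n k : ℕ} (h : k < n) :
    (n.choose k : ℝ) / n.choose (k + 1) = (k + 1) / (n - k) := by
  have hpos : (0 : ℝ) < n.choose (k + 1) := by exact_mod_cast Nat.choose_pos h
  have hsub : (0 : ℝ) < n - k := by rw [sub_pos]; exact_mod_cast h
  rw [div_eq_div_iff hpos.ne' hsub.ne']
  have key : ((n.choose (k + 1) * (k + 1) : ℕ) : ℝ) = (n.choose k * (n - k) : ℕ) :=
    congrArg _ (Nat.choose_succ_right_eq n k)
  push_cast [h.le] at key
  linarith

lemma d_eq_of_lt {p ℓ : ℕ} (h : ℓ < p) :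
    d p ℓ = (p - 3 - ℓ) * (p - 1).choose ℓ * (p ^ 2 - 2 * p + 1).choose ℓ := by
  rw [d, Nat.choose_symm (by omega)]

lemma cast_sq_sub_two_mul_add_one {p : ℕ} (hp : 2 ≤ p) :
    ((p ^ 2 - 2 * p + 1 : ℕ) : ℝ) = ((p : ℝ) - 1) ^ 2 := by
  have : 2 * p ≤ p ^ 2 := by nlinarith
  push_cast [this]
  ring

lemma d_div_d_succ {p ℓ : ℕ} (h : ℓ + 5 ≤ p) :
    (d p ℓ : ℝ) / d p (ℓ + 1) =
      (1 + 1 / ((p : ℝ) - 4 - ℓ)) * ((ℓ + 1) / ((p : ℝ) - 1 - ℓ)) *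
        ((ℓ + 1) / (((p : ℝ) - 1) ^ 2 - ℓ)) := by
  have hℓN : ℓ + 1 < p ^ 2 - 2 * p + 1 := by
    have : 2 * p ≤ p ^ 2 := by nlinarith
    zify [this]; nlinarith
  rw [d_eq_of_lt (by omega), d_eq_of_lt (by omega)]
  simp only [Nat.cast_mul]
  rw [mul_div_mul_comm, mul_div_mul_comm, Nat.cast_choose_div_choose_succ (by omega),
    Nat.cast_choose_div_choose_succ (by omega), cast_sq_sub_two_mul_add_one (by omega)]
  have h1 : ((p - 1 : ℕ) : ℝ) = p - 1 := Nat.cast_pred (by omega)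
  have h4 : ((p - 4 - ℓ : ℕ) : ℝ) = p - 4 - ℓ := by
    rw [Nat.sub_sub, Nat.cast_sub (by omega)]; push_cast; ring
  have hm : (p : ℝ) - 4 - ℓ ≠ 0 := by rw [← h4]; exact_mod_cast (by omega : p - 4 - ℓ ≠ 0)
  rw [show p - 3 - ℓ = p - 4 - ℓ + 1 by omega, show p - 3 - (ℓ + 1) = p - 4 - ℓ by omega,
    Nat.cast_add_one, h4, h1, same_add_div hm]

theorem d_div_d_succ_monotoneOn (p : ℕ) :
    MonotoneOn (fun ℓ ↦ (d p ℓ : ℝ) / d p (ℓ + 1)) (Set.Iio (p - 4)) := by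
  intro ℓ hℓ ℓ' hℓ' hle
  simp only [Set.mem_Iio] at hℓ hℓ'
  dsimp only
  have hle' : (ℓ : ℝ) ≤ ℓ' := by exact_mod_cast hle
  have hp : (ℓ' : ℝ) + 5 ≤ p := by exact_mod_cast (by omega : ℓ' + 5 ≤ p)
  rw [d_div_d_succ (by omega), d_div_d_succ (by omega)]
  have h4 : 0 < (p : ℝ) - 4 - ℓ' := by linarith
  have h1 : 0 < (p : ℝ) - 1 - ℓ := by linarith
  have h1' : 0 < (p : ℝ) - 1 - ℓ' := by linarith
  have hN : 0 < ((p : ℝ) - 1) ^ 2 - ℓ := by nlinarith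
  have hN' : 0 < ((p : ℝ) - 1) ^ 2 - ℓ' := by nlinarith
  gcongr

theorem stmt_3 (p ℓ : ℕ) (hp : 5 ≤ p) (hℓ : ℓ ≤ p - 5) :
    (d p ℓ : ℝ) / (d p (ℓ + 1) : ℝ) ≤ (d p (p - 5) : ℝ) / (d p (p - 4) : ℝ) := by
  have h := d_div_d_succ_monotoneOn p (Set.mem_Iio.2 (by omega : ℓ < p - 4))
    (Set.mem_Iio.2 (by omega : p - 5 < p - 4)) hℓ
  simpa only [show p - 5 + 1 = p - 4 by omega] using h
end

section
/- Let p ≥ 5 and define L_Li(p) = (1/C(p²-p, p-1)) · Σ_{ℓ=1}^{p-1} (ℓ/(ℓ+p-2)) · C(p²-2p+1, ℓ) · C(p-1, ℓ). Then (p-3)/(2p-3) < L_Li(p) < (p-1)/(2p-3). -/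
/-!
Write `p = q + 1`. For `1 ≤ ℓ ≤ q` the weight `ℓ / (ℓ + q - 1)` lies between `ℓ / (2q - 1)` and
`q / (2q - 1)`. The numbers `C(q², ℓ) C(q, ℓ) / C(q² + q, q)`, `0 ≤ ℓ ≤ q`, form the
hypergeometric distribution: by Vandermonde they sum to `1`, and their mean is
`q² / (q + 1) > q - 2`. Averaging the two weight bounds against it gives both inequalities; the
upper one is strict because the `ℓ = 0` term carries probability but no weight.
-/

/-- The communication load of the Li-CDC scheme for `K = p² - p`, `r = s = p - 1`. -/
noncomputable def LLi (p : ℕ) : ℝ :=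
  (∑ ℓ ∈ Finset.Icc 1 (p - 1),
      ((ℓ : ℝ) / ((ℓ : ℝ) + (p : ℝ) - 2)) *
        ((p ^ 2 - 2 * p + 1).choose ℓ : ℝ) * (((p - 1).choose ℓ : ℝ))) /
    ((p ^ 2 - p).choose (p - 1) : ℝ)

open Finset

namespace Nat

theorem sum_range_choose_mul_choose (n m : ℕ) :
    ∑ k ∈ range (m + 1), n.choose k * m.choose k = (n + m).choose m := by
  rw [add_choose_eq, Finset.Nat.sum_antidiagonal_eq_sum_range_succ_mk]
  exact sum_congr rfl fun k hk => by rw [choose_symm (mem_range_succ_iff.mp hk)]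

theorem sum_range_mul_choose_mul_choose_succ (n m : ℕ) :
    ∑ k ∈ range (m + 2), k * (n.choose k * (m + 1).choose k) =
      (m + 1) * (n + m).choose (m + 1) := by
  have vandermonde := add_choose_eq n m (m + 1)
  rw [Finset.Nat.sum_antidiagonal_eq_sum_range_succ_mk, sum_range_succ'] at vandermonde
  simp only [tsub_zero, choose_succ_self, mul_zero, add_zero, add_tsub_add_eq_tsub_right]
    at vandermonde
  rw [sum_range_succ', zero_mul, add_zero, vandermonde, mul_sum]
  refine sum_congr rfl fun i hi => ?_
  rw [choose_symm (mem_range_succ_iff.mp hi)]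
  linear_combination n.choose (i + 1) * (add_one_mul_choose_eq m i).symm

theorem add_mul_sum_range_mul_choose_mul_choose (n m : ℕ) :
    (n + m) * ∑ k ∈ range (m + 1), k * (n.choose k * m.choose k) = n * m * (n + m).choose m := by
  cases m with
  | zero => simp
  | succ s =>
    have h := choose_mul_succ_eq (n + s) (s + 1)
    rw [add_tsub_add_eq_tsub_right, add_tsub_cancel_right] at h
    rw [sum_range_mul_choose_mul_choose_succ, ← add_assoc]
    linear_combination (s + 1) * h

end Nat

lemma LLi_succ {q : ℕ} (hq : 1 ≤ q) :
    LLi (q + 1) = (∑ ℓ ∈ range (q + 1),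
      (ℓ : ℝ) / (ℓ + q - 1) * ((q ^ 2).choose ℓ * q.choose ℓ)) / (q ^ 2 + q).choose q := by
  have hn : (q + 1) ^ 2 - 2 * (q + 1) + 1 = q ^ 2 := by
    zify [show 2 * (q + 1) ≤ (q + 1) ^ 2 by nlinarith]; ring
  have hK : (q + 1) ^ 2 - (q + 1) = q ^ 2 + q := by
    zify [show q + 1 ≤ (q + 1) ^ 2 by nlinarith]; ring
  rw [LLi, add_tsub_cancel_right, hn, hK, range_eq_Ico, sum_eq_sum_Ico_succ_bot q.succ_pos,
    ← Ico_add_one_right_eq_Icc]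
  simp only [Nat.cast_add, Nat.cast_one, CharP.cast_eq_zero, zero_add, zero_div,
    Nat.choose_zero_right, mul_one, Nat.succ_eq_add_one]
  exact congrArg (· / _) (sum_congr rfl fun ℓ _ => by ring)

lemma div_add_sub_one_le_div {ℓ q : ℕ} (hq : 1 ≤ q) (hℓ : ℓ ≤ q) :
    (ℓ : ℝ) / (ℓ + q - 1) ≤ q / (2 * q - 1) := by
  have hq' : (1 : ℝ) ≤ q := by exact_mod_cast hq
  rcases ℓ.eq_zero_or_pos with rfl | hℓ₀
  · simpa using div_nonneg (by positivity) (by linarith)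
  have hℓ₁ : (1 : ℝ) ≤ ℓ := by exact_mod_cast hℓ₀
  have hℓq : (ℓ : ℝ) ≤ q := by exact_mod_cast hℓ
  rw [div_le_div_iff₀ (by linarith) (by linarith)]
  nlinarith

lemma div_le_div_add_sub_one {ℓ q : ℕ} (hℓ : ℓ ≤ q) :
    (ℓ : ℝ) / (2 * q - 1) ≤ ℓ / (ℓ + q - 1) := by
  rcases ℓ.eq_zero_or_pos with rfl | hℓ₀
  · simp
  have hℓ₁ : (1 : ℝ) ≤ ℓ := by exact_mod_cast hℓ₀
  have hℓq : (ℓ : ℝ) ≤ q := by exact_mod_cast hℓ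
  exact div_le_div_of_nonneg_left (by positivity) (by linarith) (by linarith)

lemma LLi_succ_lt {q : ℕ} (hq : 1 ≤ q) : LLi (q + 1) < q / (2 * q - 1) := by
  have hq' : (1 : ℝ) ≤ q := by exact_mod_cast hq
  have hS : (0 : ℝ) < (q ^ 2 + q).choose q := by exact_mod_cast Nat.choose_pos (by nlinarith)
  have vandermonde : ∑ ℓ ∈ range (q + 1), ((q ^ 2).choose ℓ * q.choose ℓ : ℝ) =
      (q ^ 2 + q).choose q := by
    exact_mod_cast Nat.sum_range_choose_mul_choose (q ^ 2) q
  rw [LLi_succ hq, div_lt_iff₀ hS, ← vandermonde, mul_sum]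
  refine sum_lt_sum (fun ℓ hℓ => ?_) ⟨0, by simp, ?_⟩
  · exact mul_le_mul_of_nonneg_right (div_add_sub_one_le_div hq (mem_range_succ_iff.mp hℓ))
      (by positivity)
  · simpa using div_pos (by linarith) (by linarith)

lemma lt_LLi_succ {q : ℕ} (hq : 1 ≤ q) : (q - 2) / (2 * q - 1) < LLi (q + 1) := by
  have hq' : (1 : ℝ) ≤ q := by exact_mod_cast hq
  have hS : (0 : ℝ) < (q ^ 2 + q).choose q := by exact_mod_cast Nat.choose_pos (by nlinarith)
  have mean : (q ^ 2 + q) * ∑ ℓ ∈ range (q + 1), (ℓ * ((q ^ 2).choose ℓ * q.choose ℓ) : ℝ) =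
      q ^ 2 * q * (q ^ 2 + q).choose q := by
    exact_mod_cast Nat.add_mul_sum_range_mul_choose_mul_choose (q ^ 2) q
  rw [LLi_succ hq, lt_div_iff₀ hS]
  calc (q - 2) / (2 * q - 1) * (q ^ 2 + q).choose q
      < (∑ ℓ ∈ range (q + 1), (ℓ * ((q ^ 2).choose ℓ * q.choose ℓ) : ℝ)) / (2 * q - 1) := by
        rw [div_mul_eq_mul_div]
        refine div_lt_div_of_pos_right ?_ (by linarith)
        refine lt_of_mul_lt_mul_left (a := (q ^ 2 + q : ℝ)) ?_ (by positivity)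
        rw [mean]
        nlinarith [mul_pos hS (by positivity : (0 : ℝ) < q ^ 2 + 2 * q)]
    _ = ∑ ℓ ∈ range (q + 1), (ℓ : ℝ) / (2 * q - 1) * ((q ^ 2).choose ℓ * q.choose ℓ) := by
        rw [sum_div]
        exact sum_congr rfl fun ℓ _ => by ring
    _ ≤ _ := sum_le_sum fun ℓ hℓ => mul_le_mul_of_nonneg_right
        (div_le_div_add_sub_one (mem_range_succ_iff.mp hℓ)) (by positivity)

theorem stmt_17 (p : ℕ) (hp : 5 ≤ p) :
    ((p : ℝ) - 3) / (2 * (p : ℝ) - 3) < LLi p ∧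
      LLi p < ((p : ℝ) - 1) / (2 * (p : ℝ) - 3) := by
  obtain ⟨q, rfl⟩ : ∃ q, p = q + 1 := ⟨p - 1, by omega⟩
  push_cast
  constructor
  · convert lt_LLi_succ (q := q) (by omega) using 1
    ring_nf
  · convert LLi_succ_lt (q := q) (by omega) using 1
    ring_nf
end

section
/- For every prime p, the set D constructed by Ruzsa in Z_{p²-p} is a (p²-p, p-1, 0, 2p-3) almost difference set; equivalently, D is a modular Golomb ruler of size p-1 in Z_{p²-p}, i.e., all differences d-d' for distinct d, d' ∈ D are pairwise distinct modulo p²-p, and the 2p-2 missing differences are exactly the nonzero multiples of p or of p-1. -/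
/-!
Via the Chinese remainder theorem, `D` becomes the graph `{(a, g^a)}` of the additive character
`a ↦ g^a` of `ℤ/(p-1)` with values in `𝔽_p`. The shift `(x, y)` carries the graph point
`(b, g^b)` into the graph exactly when `g^b (g^x - 1) = y`. For `x ≠ 0` we have `g^x ≠ 1`, so this
determines `g^b`, hence `b`, and a solution exists iff `y ≠ 0` because `g` generates `𝔽_p^×`. For
`x = 0` and `y ≠ 0` there is no solution. So a nonzero shift is represented once if both of its
coordinates are nonzero, and the `2p - 3` nonzero points of the two coordinate axes are missed.
-/

/-- The difference function `diff_D(x) = |D ∩ (D + x)|`. -/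
def diffD {A : Type*} [AddCommGroup A] [Fintype A] [DecidableEq A]
    (D : Finset A) (x : A) : ℕ :=
  (D ∩ D.image (· + x)).card

open Finset

def ZMod.crtEquiv {N m n : ℕ} (hN : N = m * n) (hmn : m.Coprime n) : ZMod N ≃+* ZMod m × ZMod n :=
  (ZMod.ringEquivCongr hN).trans (ZMod.chineseRemainder hmn)

@[simp]
lemma ZMod.crtEquiv_apply {N m n : ℕ} [NeZero N] (hN : N = m * n) (hmn : m.Coprime n)
    (x : ZMod N) : ZMod.crtEquiv hN hmn x = ((x.val : ZMod m), (x.val : ZMod n)) := by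
  subst hN
  simp only [crtEquiv, RingEquiv.trans_apply, ZMod.ringEquivCongr_refl_apply]
  change ZMod.cast x = _
  rw [ZMod.cast_eq_val]
  rfl

section DiffD

variable {A B : Type*} [AddCommGroup A] [Fintype A] [DecidableEq A]
  [AddCommGroup B] [Fintype B] [DecidableEq B]

lemma diffD_eq_card_filter (D : Finset A) (x : A) : diffD D x = #{y ∈ D | y - x ∈ D} := by
  unfold diffD
  congr 1
  ext y
  simp [sub_eq_add_neg]

lemma diffD_congr {F : Type*} [EquivLike F A B] [AddEquivClass F A B] (e : F) {D : Finset A}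
    {E : Finset B} (h : ∀ x, x ∈ D ↔ e x ∈ E) (x : A) : diffD D x = diffD E (e x) := by
  rw [diffD_eq_card_filter, diffD_eq_card_filter]
  exact card_equiv (EquivLike.toEquiv e) fun y => by simp [h, ← map_sub]

end DiffD

lemma card_filter_ne_zero_and_fst_eq_zero_or_snd_eq_zero {α β : Type*} [Zero α] [Zero β]
    [Fintype α] [Fintype β] [DecidableEq α] [DecidableEq β] :
    #{z : α × β | z ≠ 0 ∧ (z.1 = 0 ∨ z.2 = 0)} = Fintype.card α + Fintype.card β - 2 := by
  have hdisj : Disjoint ({0} ×ˢ (univ.erase 0) : Finset (α × β)) ((univ.erase 0) ×ˢ {0}) := by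
    rw [disjoint_left]
    rintro ⟨a, b⟩ h₁ h₂
    simp only [mem_product, mem_singleton, mem_erase] at h₁ h₂
    exact h₂.1.1 h₁.1
  have hfilter : ({z : α × β | z ≠ 0 ∧ (z.1 = 0 ∨ z.2 = 0)} : Finset _) =
      ({0} ×ˢ (univ.erase 0)).disjUnion ((univ.erase 0) ×ˢ {0}) hdisj := by
    ext ⟨a, b⟩
    simp only [mem_filter, mem_univ, true_and, mem_disjUnion, mem_product, mem_singleton, mem_erase,
      and_true, ne_eq, Prod.ext_iff, Prod.fst_zero, Prod.snd_zero]
    tauto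
  rw [hfilter, card_disjUnion, card_product, card_product, card_erase_of_mem (mem_univ _),
    card_erase_of_mem (mem_univ _), card_singleton, card_singleton, card_univ, card_univ]
  have := Fintype.card_pos (α := α)
  have := Fintype.card_pos (α := β)
  omega

namespace AddChar

lemma exists_apply_eq_of_injective {M K : Type*} [AddGroup M] [Fintype M] [Field K] [Fintype K]
    {φ : AddChar M K} (hφ : Function.Injective φ) (hcard : Fintype.card K = Fintype.card M + 1)
    {c : K} (hc : c ≠ 0) : ∃ b, φ b = c := by
  classical
  have hsub : univ.image φ ⊆ univ.erase 0 := fun y hy => by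
    obtain ⟨b, -, rfl⟩ := mem_image.1 hy
    exact mem_erase.2 ⟨(φ.val_isUnit b).ne_zero, mem_univ _⟩
  have heq := eq_of_subset_of_card_le hsub <| by
    rw [card_erase_of_mem (mem_univ _), card_univ, hcard, card_image_of_injective _ hφ, card_univ]
    simp
  simpa [← heq] using mem_erase.2 ⟨hc, mem_univ c⟩

variable {M K : Type*} [AddCommGroup M] [Fintype M] [DecidableEq M] [Field K] [DecidableEq K]
  (φ : AddChar M K)

def graph : Finset (M × K) := univ.image fun a => (a, φ a)

lemma mem_graph {z : M × K} : z ∈ φ.graph ↔ φ z.1 = z.2 := by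
  simp [graph, Prod.ext_iff]

lemma card_graph : #φ.graph = Fintype.card M :=
  (card_image_of_injective _ fun _ _ h => congrArg Prod.fst h).trans card_univ

variable [Fintype K]

lemma diffD_graph_eq_card_filter (x : M) (y : K) :
    diffD φ.graph (x, y) = #{b : M | φ b * (φ x - 1) = y} := by
  have key (b : M) : φ b * (φ x - 1) = y ↔ φ b = φ (b + x) - y := by
    rw [map_add_eq_mul]
    constructor <;> intro h <;> linear_combination -h
  rw [diffD_eq_card_filter]
  refine card_nbij' (fun z => z.1 - x) (fun b => (b + x, φ (b + x))) ?_ ?_ ?_ ?_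
  · rintro ⟨a, c⟩ h
    simp_all [mem_graph]
  · intro b h
    simp_all [mem_graph]
  · rintro ⟨a, c⟩ h
    simp_all [mem_graph]
  · intro b _
    simp

lemma diffD_graph (hφ : Function.Injective φ) (hcard : Fintype.card K = Fintype.card M + 1)
    {z : M × K} (hz : z ≠ 0) : diffD φ.graph z = if z.1 = 0 ∨ z.2 = 0 then 0 else 1 := by
  obtain ⟨x, y⟩ := z
  rw [diffD_graph_eq_card_filter]
  by_cases hx : x = 0
  · have hy : y ≠ 0 := by rintro rfl; exact hz (by rw [hx]; rfl)
    simp [hx, eq_comm (b := y), hy]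
  have hx₁ : φ x - 1 ≠ 0 := sub_ne_zero.2 fun h => hx (hφ (h.trans φ.map_zero_eq_one.symm))
  simp_rw [← eq_div_iff hx₁]
  by_cases hy : y = 0
  · simp [hy, (φ.val_isUnit _).ne_zero]
  obtain ⟨b, hb⟩ := exists_apply_eq_of_injective hφ hcard (div_ne_zero hy hx₁)
  rw [if_neg (by simp [hx, hy]), card_eq_one]
  exact ⟨b, by ext; simp [← hb, hφ.eq_iff]⟩

section ZModChar

variable {C : Type*} [CommMonoid C] {n : ℕ} [NeZero n] {ζ : C}

lemma zmodChar_injective {hζ : ζ ^ n = 1} (hord : orderOf ζ = n) :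
    Function.Injective (zmodChar n hζ) := fun a b h => by
  rw [zmodChar_apply, zmodChar_apply] at h
  exact ZMod.val_injective _ <| pow_injOn_Iio_orderOf (by simp [hord, a.val_lt])
    (by simp [hord, b.val_lt]) h

lemma exists_mem_Icc_natCast_eq_and_pow_eq_iff (hζ : ζ ^ n = 1) (a : ZMod n) (c : C) :
    (∃ i ∈ Icc 1 n, a = i ∧ c = ζ ^ i) ↔ zmodChar n hζ a = c := by
  constructor
  · rintro ⟨i, -, rfl, rfl⟩
    exact zmodChar_apply' hζ i
  · rintro rfl
    refine ⟨(a - 1).val + 1, mem_Icc.2 ⟨by omega, (a - 1).val_lt⟩, by simp, ?_⟩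
    rw [← zmodChar_apply' hζ]
    simp

end ZModChar

end AddChar

theorem stmt_19 (p : ℕ) (hp : p.Prime) [NeZero (p ^ 2 - p)]
    (g : ZMod p) (hg : orderOf g = p - 1)
    (D : Finset (ZMod (p ^ 2 - p)))
    (hD : ∀ x : ZMod (p ^ 2 - p),
      x ∈ D ↔ ∃ i ∈ Finset.Icc 1 (p - 1),
        ((x.val : ZMod (p - 1)) = (i : ZMod (p - 1)) ∧ (x.val : ZMod p) = g ^ i)) :
    D.card = p - 1 ∧
      (∀ x : ZMod (p ^ 2 - p), x ≠ 0 → diffD D x = 0 ∨ diffD D x = 1) ∧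
      (Finset.univ.filter
        (fun x : ZMod (p ^ 2 - p) => x ≠ 0 ∧ diffD D x = 0)).card = 2 * p - 3 ∧
      (∀ x : ZMod (p ^ 2 - p), x ≠ 0 →
        (diffD D x = 0 ↔ p ∣ x.val ∨ (p - 1) ∣ x.val)) := by
  have hp₂ := hp.two_le
  have := Fact.mk hp
  have : NeZero (p - 1) := ⟨by omega⟩
  let f := ZMod.crtEquiv (N := p ^ 2 - p) (m := p - 1) (n := p) (by rw [Nat.sub_mul, one_mul, sq])
    ((Nat.coprime_self_sub_left (by omega)).2 (Nat.coprime_one_left p))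
  let φ := AddChar.zmodChar (p - 1) (hg ▸ pow_orderOf_eq_one g)
  have hcard : Fintype.card (ZMod p) = Fintype.card (ZMod (p - 1)) + 1 := by
    simp only [ZMod.card]; omega
  have hmem (x : ZMod (p ^ 2 - p)) : x ∈ D ↔ f x ∈ φ.graph := by
    rw [hD, AddChar.mem_graph, ZMod.crtEquiv_apply]
    exact AddChar.exists_mem_Icc_natCast_eq_and_pow_eq_iff _ _ _
  have hdiff (x : ZMod (p ^ 2 - p)) (hx : x ≠ 0) :
      diffD D x = if (f x).1 = 0 ∨ (f x).2 = 0 then 0 else 1 := by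
    rw [diffD_congr f hmem,
      φ.diffD_graph (AddChar.zmodChar_injective hg) hcard (by simpa using hx)]
  refine ⟨?_, fun x hx => ?_, ?_, fun x hx => ?_⟩
  · rw [card_equiv f.toEquiv hmem, AddChar.card_graph, ZMod.card]
  · rw [hdiff x hx]; split_ifs <;> simp
  · rw [card_equiv f.toEquiv (t := {z | z ≠ 0 ∧ (z.1 = 0 ∨ z.2 = 0)}),
      card_filter_ne_zero_and_fst_eq_zero_or_snd_eq_zero, ZMod.card, ZMod.card]
    · omega
    intro x
    by_cases hx : x = 0
    · simp [hx]
    · rw [mem_filter, mem_filter, hdiff x hx]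
      split_ifs with h <;> simp [hx, h]
  · simp only [hdiff x hx, f, ZMod.crtEquiv_apply, ZMod.natCast_eq_zero_iff]
    split_ifs with h <;> simpa [or_comm] using h
end
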